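/- arXiv:1502.00590 — 2 statements merged into one kernel-verified Lean document; each statement's English description precedes it below -/
import Mathlib

section
/- Let A be an (α,β)-Frobenius extension of B with trace map tr and dual sets of generators {x_1,...,x_n}, {y_1,...,y_n}. Then the Nakayama isomorphism ψ associated to tr satisfies ψ(a) = Σ_{i=1}^n y_i α(tr(a x_i)) for all a ∈ C_A(B), and its inverse satisfies ψ^{-1}(a) = Σ_{i=1}^n β(tr(y_i a)) x_i for all a ∈ C_A(α(B)). -/
/-!
Both formulas come from expanding an element in the dual bases and using that `tr` is
`β`-linear on the left and `α`-linear on the right. For `a ∈ C_A(B)` the coefficients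
`β(tr(z yᵢ))` of `z = Σ β(tr(z yᵢ)) xᵢ` commute past `a`, so both `tr(a z)` and
`tr(z ψ(a))` equal `Σ tr(z yᵢ) tr(a xᵢ)`. Dually, applying `α` to the second expansion gives
`z = Σ yᵢ α(tr(xᵢ z))`, and for `a ∈ C_A(α(B))` both sides of the second formula equal
`Σ tr(yᵢ a) tr(xᵢ z)`.
-/

open Finset

section FrobeniusTrace

variable {A : Type*} [Ring A] {B : Subring A} {α : A ≃+* A} {β : B ≃+* B} {tr : A →+ B}

theorem trace_beta_mul
    (htr : ∀ (b b' : B) (z : A), tr ((β b : A) * z * α (b' : A)) = b * tr z * b')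
    (b : B) (z : A) : tr ((β b : A) * z) = b * tr z := by
  simpa using htr b 1 z

theorem trace_mul_alpha
    (htr : ∀ (b b' : B) (z : A), tr ((β b : A) * z * α (b' : A)) = b * tr z * b')
    (b : B) (z : A) : tr (z * α (b : A)) = tr z * b := by
  simpa using htr 1 b z

theorem trace_sum_beta_mul {ι : Type*} (s : Finset ι)
    (htr : ∀ (b b' : B) (z : A), tr ((β b : A) * z * α (b' : A)) = b * tr z * b')
    (c : ι → B) (w : ι → A) :
    tr (∑ i ∈ s, (β (c i) : A) * w i) = ∑ i ∈ s, c i * tr (w i) := by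
  simp only [map_sum, trace_beta_mul htr]

theorem trace_sum_mul_alpha {ι : Type*} (s : Finset ι)
    (htr : ∀ (b b' : B) (z : A), tr ((β b : A) * z * α (b' : A)) = b * tr z * b')
    (c : ι → B) (w : ι → A) :
    tr (∑ i ∈ s, w i * α (c i : A)) = ∑ i ∈ s, tr (w i) * c i := by
  simp only [map_sum, trace_mul_alpha htr]

theorem eq_sum_mul_alpha_trace {ι : Type*} [Fintype ι] (x y : ι → A)
    (hdual : ∀ a : A, a = ∑ i, α.symm (y i) * ((tr (x i * α a) : B) : A)) (z : A) :
    z = ∑ i, y i * α ((tr (x i * z) : B) : A) := by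
  simpa using congrArg α (hdual (α.symm z))

end FrobeniusTrace

theorem nakayama_explicit_formula_general
    {A : Type u} [Ring A] (B : Subring A) (α : A ≃+* A) (β : B ≃+* B)
    (tr : A →+ B)
    (htrbimod : ∀ (b b' : B) (z : A), tr ((β b : A) * z * α (b' : A)) = b * tr z * b')
    (n : ℕ) (x y : Fin n → A)
    (hdual₁ : ∀ a : A, a = ∑ i, ((β (tr (a * y i)) : B) : A) * x i)
    (hdual₂ : ∀ a : A, a = ∑ i, α.symm (y i) * ((tr (x i * α a) : B) : A)) :
    -- explicit formula for ψ on C_A(B):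
    (∀ a : A, (∀ b : B, a * (b : A) = (b : A) * a) →
      ∀ z : A, tr (a * z) = tr (z * (∑ i, y i * α ((tr (a * x i) : B) : A)))) ∧
    -- explicit formula for ψ⁻¹ on C_A(α(B)):
    (∀ a : A, (∀ b : B, a * α (b : A) = α (b : A) * a) →
      ∀ z : A, tr ((∑ i, ((β (tr (y i * a)) : B) : A) * x i) * z) = tr (z * a)) := by
  constructor
  · intro a ha z
    have hexpand : a * z = ∑ i, ((β (tr (z * y i)) : B) : A) * (a * x i) := by
      conv_lhs => rw [hdual₁ z]
      simp only [mul_sum, ← mul_assoc, ha]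
    rw [hexpand, mul_sum, trace_sum_beta_mul _ htrbimod]
    simp only [← mul_assoc, trace_sum_mul_alpha _ htrbimod]
  · intro a ha z
    have hexpand : z * a = ∑ i, y i * a * α ((tr (x i * z) : B) : A) := by
      conv_lhs => rw [eq_sum_mul_alpha_trace x y hdual₂ z]
      simp only [sum_mul, mul_assoc, ha]
    rw [hexpand, trace_sum_mul_alpha _ htrbimod, sum_mul]
    simp only [mul_assoc, trace_sum_beta_mul _ htrbimod]

/-- Let `A` be an `(α,β)`-Frobenius extension of `B` with trace map `tr` and dual sets of
generators `{x i}`, `{y i}` (so `a = Σ β(tr(a y i)) x i = Σ α⁻¹(y i) tr(x i α(a))` for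
all `a ∈ A`).  Then the Nakayama isomorphism `ψ` associated to `tr` (characterized by
`tr(c x) = tr(x ψ(c))` for all `x`) is given explicitly by
`ψ(a) = Σ i, y i * α(tr(a * x i))` for `a ∈ C_A(B)`, and its inverse by
`ψ⁻¹(a) = Σ i, β(tr(y i * a)) * x i` for `a ∈ C_A(α(B))` (the latter expressed through
the defining property of `ψ`). -/
theorem nakayama_explicit_formula
    {A : Type u} [Ring A] (B : Subring A) (α : A ≃+* A) (β : B ≃+* B)
    (tr : A →+ B)
    (htrbimod : ∀ (b b' : B) (z : A), tr ((β b : A) * z * α (b' : A)) = b * tr z * b')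
    (htrnd : ∀ a : A, (∀ x : A, tr (x * a) = 0) → a = 0)
    (htrsurj : ∀ f : A →+ B, (∀ (b : B) (x : A), f ((β b : A) * x) = b * f x) →
      ∃ a : A, ∀ x : A, f x = tr (x * a))
    (n : ℕ) (x y : Fin n → A)
    (hdual₁ : ∀ a : A, a = ∑ i, ((β (tr (a * y i)) : B) : A) * x i)
    (hdual₂ : ∀ a : A, a = ∑ i, α.symm (y i) * ((tr (x i * α a) : B) : A)) :
    -- explicit formula for ψ on C_A(B):
    (∀ a : A, (∀ b : B, a * (b : A) = (b : A) * a) →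
      ∀ z : A, tr (a * z) = tr (z * (∑ i, y i * α ((tr (a * x i) : B) : A)))) ∧
    -- explicit formula for ψ⁻¹ on C_A(α(B)):
    (∀ a : A, (∀ b : B, a * α (b : A) = α (b : A) * a) →
      ∀ z : A, tr ((∑ i, ((β (tr (y i * a)) : B) : A) * x i) * z) = tr (z * a)) :=
  nakayama_explicit_formula_general B α β tr htrbimod n x y hdual₁ hdual₂
end

section
/- Let F be a field, A a finite-dimensional Frobenius F-algebra with Nakayama automorphism ψ_A, and B a Frobenius subalgebra with Nakayama automorphism ψ_B, such that A is projective as a left B-module. Then A is a (ψ_A, ψ_B)-Frobenius extension of B: A is finitely generated projective as a left B-module and there is an (A,B)-bimodule isomorphism A ≅ Hom_B(_{ψ_B} A_{ψ_A}, B), where the domain of Hom is A with left B-action b·a = ψ_B(b)a and right A-action a·a' = a ψ_A(a'). -/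
/-!
Let `E : A → B` be the adjoint of the inclusion `B ⊆ A` with respect to the trace forms,
`tr_B (z E(a)) = tr_A (z a)`. It is left `B`-linear, and the Nakayama relations give
`E (y ψ_A(b)) = E(y) ψ_B(b)`. Every left `B`-linear `f : A → B` equals `E(· a₀)`, where `a₀`
represents the functional `tr_B ∘ f` through the trace form of `A`: by `B`-linearity `f x` and
`E (x a₀)` pair equally with all of `B` under `tr_B`. Untwisting by `ψ_A` and `ψ_B`, the map
`a ↦ ψ_B⁻¹ ∘ E(· ψ_A(a))` is the required bimodule isomorphism.
-/

section TraceForm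

variable {F A : Type*} [Field F] [Ring A] [Algebra F A] {tr : A →ₗ[F] F}

theorem eq_of_forall_trace_mul_eq (htr : ∀ a : A, (∀ x : A, tr (x * a) = 0) → a = 0)
    {a a' : A} (h : ∀ x, tr (x * a) = tr (x * a')) : a = a' :=
  sub_eq_zero.mp <| htr _ fun x => by rw [mul_sub, map_sub, h, sub_self]

variable (tr) in
noncomputable def traceDual : A →ₗ[F] Module.Dual F A :=
  ((LinearMap.mul F A).compr₂ tr).flip

theorem traceDual_bijective [FiniteDimensional F A]
    (htr : ∀ a : A, (∀ x : A, tr (x * a) = 0) → a = 0) :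
    Function.Bijective (traceDual tr) := by
  have hinj : Function.Injective (traceDual tr) := fun a a' h =>
    eq_of_forall_trace_mul_eq htr fun x => LinearMap.congr_fun h x
  exact ⟨hinj, (LinearMap.injective_iff_surjective_of_finrank_eq_finrank
    Subspace.dual_finrank_eq.symm).mp hinj⟩

noncomputable def traceDualEquiv [FiniteDimensional F A]
    (htr : ∀ a : A, (∀ x : A, tr (x * a) = 0) → a = 0) : A ≃ₗ[F] Module.Dual F A :=
  LinearEquiv.ofBijective _ (traceDual_bijective htr)

theorem trace_mul_traceDualEquiv_symm [FiniteDimensional F A]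
    (htr : ∀ a : A, (∀ x : A, tr (x * a) = 0) → a = 0) (φ : Module.Dual F A) (x : A) :
    tr (x * (traceDualEquiv htr).symm φ) = φ x :=
  LinearMap.congr_fun ((traceDualEquiv htr).apply_symm_apply φ) x

end TraceForm

section TraceAdjoint

variable {F A : Type*} [Field F] [Ring A] [Algebra F A] (trA : A →ₗ[F] F)
  {B : Subalgebra F A} [FiniteDimensional F B] {trB : B →ₗ[F] F}
  (htrB : ∀ b : B, (∀ z : B, trB (z * b) = 0) → b = 0)

noncomputable def traceAdjoint : A →ₗ[F] B :=
  (traceDualEquiv htrB).symm.toLinearMap ∘ₗ B.val.toLinearMap.dualMap ∘ₗ traceDual trA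

theorem trace_mul_traceAdjoint (z : B) (a : A) :
    trB (z * traceAdjoint trA htrB a) = trA (z * a) :=
  trace_mul_traceDualEquiv_symm htrB _ z

theorem traceAdjoint_mul_left (b : B) (y : A) :
    traceAdjoint trA htrB (b * y) = b * traceAdjoint trA htrB y :=
  eq_of_forall_trace_mul_eq htrB fun z => by
    rw [trace_mul_traceAdjoint, ← mul_assoc z b, trace_mul_traceAdjoint, Subalgebra.coe_mul,
      mul_assoc]

theorem traceAdjoint_mul_nakayama {ψA : A ≃ₐ[F] A}
    (hψA : ∀ a₁ a₂ : A, trA (a₁ * a₂) = trA (a₂ * ψA a₁)) {ψB : B ≃ₐ[F] B}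
    (hψB : ∀ b₁ b₂ : B, trB (b₁ * b₂) = trB (b₂ * ψB b₁)) (y : A) (b : B) :
    traceAdjoint trA htrB (y * ψA b) = traceAdjoint trA htrB y * ψB b :=
  eq_of_forall_trace_mul_eq htrB fun z => calc
    trB (z * traceAdjoint trA htrB (y * ψA b)) = trA (b * (z * y)) := by
      rw [trace_mul_traceAdjoint, ← mul_assoc, ← hψA]
    _ = trB (b * (z * traceAdjoint trA htrB y)) := by
      rw [← mul_assoc b z, trace_mul_traceAdjoint, Subalgebra.coe_mul, mul_assoc]
    _ = trB (z * (traceAdjoint trA htrB y * ψB b)) := by rw [hψB, mul_assoc]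

theorem exists_eq_traceAdjoint_mul [FiniteDimensional F A] {trA : A →ₗ[F] F}
    (htrA : ∀ a : A, (∀ x : A, trA (x * a) = 0) → a = 0) (f : A →+ B)
    (hf : ∀ (b : B) (x : A), f (b * x) = b * f x) :
    ∃ a₀ : A, ∀ x, f x = traceAdjoint trA htrB (x * a₀) := by
  let fF : A →ₗ[F] B :=
    { f with
      map_smul' := fun c x => show f (c • x) = c • f x by
        simpa only [← Algebra.smul_def, Subalgebra.coe_algebraMap] using hf (algebraMap F B c) x }
  refine ⟨(traceDualEquiv htrA).symm (trB ∘ₗ fF), fun x => eq_of_forall_trace_mul_eq htrB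
    fun z => ?_⟩
  rw [trace_mul_traceAdjoint, ← mul_assoc, trace_mul_traceDualEquiv_symm, ← hf]
  rfl

end TraceAdjoint

section TwistedPairing

variable {F A : Type*} [Field F] [Ring A] [Algebra F A] (trA : A →ₗ[F] F)
  {B : Subalgebra F A} [FiniteDimensional F B] {trB : B →ₗ[F] F}
  (htrB : ∀ b : B, (∀ z : B, trB (z * b) = 0) → b = 0) (ψA : A ≃ₐ[F] A) (ψB : B ≃ₐ[F] B)

noncomputable def twistedPairing (a : A) : A →+ B :=
  (ψB.symm.toLinearMap ∘ₗ traceAdjoint trA htrB ∘ₗ LinearMap.mulRight F (ψA a)).toAddMonoidHom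

@[simp]
theorem twistedPairing_apply (a x : A) :
    twistedPairing trA htrB ψA ψB a x = ψB.symm (traceAdjoint trA htrB (x * ψA a)) :=
  rfl

theorem twistedPairing_add (a a' : A) :
    twistedPairing trA htrB ψA ψB (a + a') =
      twistedPairing trA htrB ψA ψB a + twistedPairing trA htrB ψA ψB a' := by
  ext x
  simp [mul_add]

theorem twistedPairing_apply_nakayama_mul (a : A) (b : B) (x : A) :
    twistedPairing trA htrB ψA ψB a (ψB b * x) = b * twistedPairing trA htrB ψA ψB a x := by
  simp [mul_assoc, traceAdjoint_mul_left]

theorem twistedPairing_mul_apply (a a' x : A) :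
    twistedPairing trA htrB ψA ψB (a' * a) x = twistedPairing trA htrB ψA ψB a (x * ψA a') := by
  simp [mul_assoc]

theorem twistedPairing_mul_coe_apply (hψA : ∀ a₁ a₂ : A, trA (a₁ * a₂) = trA (a₂ * ψA a₁))
    (hψB : ∀ b₁ b₂ : B, trB (b₁ * b₂) = trB (b₂ * ψB b₁)) (a : A) (b : B) (x : A) :
    twistedPairing trA htrB ψA ψB (a * b) x = twistedPairing trA htrB ψA ψB a x * b := by
  simp [← mul_assoc, traceAdjoint_mul_nakayama trA htrB hψA hψB]

theorem eq_zero_of_twistedPairing_apply_eq_zero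
    (htrA : ∀ a : A, (∀ x : A, trA (x * a) = 0) → a = 0) {a : A}
    (ha : ∀ x, twistedPairing trA htrB ψA ψB a x = 0) : a = 0 := by
  have hE : ∀ x, traceAdjoint trA htrB (x * ψA a) = 0 := fun x => by simpa using ha x
  have hψa : ψA a = 0 := htrA _ fun x => by
    rw [← one_mul (x * ψA a), ← OneMemClass.coe_one B, ← trace_mul_traceAdjoint trA htrB, hE,
      mul_zero, map_zero]
  simpa using hψa

theorem exists_twistedPairing_eq [FiniteDimensional F A]
    (htrA : ∀ a : A, (∀ x : A, trA (x * a) = 0) → a = 0) (f : A →+ B)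
    (hf : ∀ (b : B) (x : A), f (ψB b * x) = b * f x) :
    ∃ a : A, ∀ x, f x = twistedPairing trA htrB ψA ψB a x := by
  obtain ⟨a₀, ha₀⟩ := exists_eq_traceAdjoint_mul htrB htrA ((ψB : B →+ B).comp f)
    fun b x => by simpa using congrArg ψB (hf (ψB.symm b) x)
  exact ⟨ψA.symm a₀, fun x => by simp [← ha₀]⟩

end TwistedPairing

/-- Let `F` be a field, `A` a finite-dimensional Frobenius `F`-algebra with Nakayama
automorphism `ψ_A`, and `B` a Frobenius subalgebra with Nakayama automorphism `ψ_B`,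
such that `A` is projective as a left `B`-module.  Then `A` is a `(ψ_A, ψ_B)`-Frobenius
extension of `B`: `A` is finitely generated projective as a left `B`-module and there is
an `(A,B)`-bimodule isomorphism `A ≅ Hom_B(_{ψ_B} A_{ψ_A}, B)`, where the domain of the
Hom is `A` with left `B`-action `b · a = ψ_B(b) a` and right `A`-action
`a · a' = a ψ_A(a')`, and the Hom space carries left `A`-action `(a · f)(x) = f(x ψ_A(a))`
and right `B`-action `(f · b)(x) = f(x) b`. -/
theorem frobenius_subalgebra_gives_twisted_frobenius_extension
    {F : Type u} [Field F] {A : Type v} [Ring A] [Algebra F A] [FiniteDimensional F A]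
    (trA : A →ₗ[F] F)
    (htrAnd : ∀ a : A, (∀ x : A, trA (x * a) = 0) → a = 0)
    (ψA : A ≃ₐ[F] A)
    (hψA : ∀ a₁ a₂ : A, trA (a₁ * a₂) = trA (a₂ * ψA a₁))
    (B : Subalgebra F A)
    (trB : B →ₗ[F] F)
    (htrBnd : ∀ b : B, (∀ z : B, trB (z * b) = 0) → b = 0)
    (ψB : B ≃ₐ[F] B)
    (hψB : ∀ b₁ b₂ : B, trB (b₁ * b₂) = trB (b₂ * ψB b₁))
    (hproj : Module.Projective B A) :
    Module.Finite B A ∧ Module.Projective B A ∧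
      ∃ Φ : A → A →+ B,
        (∀ a a' : A, Φ (a + a') = Φ a + Φ a') ∧
        (∀ (a : A) (b : B) (x : A), Φ a ((ψB b : A) * x) = b * Φ a x) ∧
        (∀ (a a' x : A), Φ (a' * a) x = Φ a (x * ψA a')) ∧
        (∀ (a : A) (b : B) (x : A), Φ (a * (b : A)) x = Φ a x * b) ∧
        (∀ a : A, (∀ x : A, Φ a x = 0) → a = 0) ∧
        (∀ f : A →+ B, (∀ (b : B) (x : A), f ((ψB b : A) * x) = b * f x) →
          ∃ a : A, ∀ x : A, f x = Φ a x) :=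
  ⟨Module.Finite.of_restrictScalars_finite F B A, hproj, twistedPairing trA htrBnd ψA ψB,
    twistedPairing_add trA htrBnd ψA ψB, twistedPairing_apply_nakayama_mul trA htrBnd ψA ψB,
    twistedPairing_mul_apply trA htrBnd ψA ψB,
    twistedPairing_mul_coe_apply trA htrBnd ψA ψB hψA hψB,
    fun _ => eq_zero_of_twistedPairing_apply_eq_zero trA htrBnd ψA ψB htrAnd,
    exists_twistedPairing_eq trA htrBnd ψA ψB htrAnd⟩
end
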